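/- Let ρ_x be the law of a Galton–Watson tree with Geometric(1/2) offspring distribution (P(k children) = 2^{-k-1}) with independent uniform {-1,0,+1} label increments along edges and root label x > 0. Then the probability that all labels are positive equals w(x) = x(x+3)/((x+1)(x+2)). Equivalently, ∑_{n≥0} |𝕋_n^+(x)|/(2·12^n) = w(x), where 𝕋_n^+(x) is the set of well-labeled trees with n edges, root label x, and all labels positive. -/

import Mathlib

/-!
The weight `12^{-n}` of a well-labeled tree with `n` edges is twice its `ρ_x`-mass. Splitting a
tree at its root into a forest of subtrees shows that the generating function `G x` of trees with
positive labels satisfies `G x = 1 + (G (x-1) + G x + G (x+1)) G x / 12` for `x > 0`, and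
`G x = 0` for `x ≤ 0`. Truncating by the number of edges shows that `G` lies below every
nonnegative supersolution, in particular below `2w` (`w` is `survivalProb`). The gap
`D = 2w - G` then satisfies `D x = 2w(x) G(x) (D (x-1) + D x + D (x+1)) / 12` with `2w · G ≤ 4`,
so `D` is convex on `ℕ`; being bounded it is nonincreasing, and `D 0 = 0 ≤ D` forces `D = 0`.
-/

-- A plane rooted tree with integer increments on edges: a tree is a node together
-- with the (ordered) forest of its subtrees, each subtree carrying the label increment
-- of the edge to its root.
mutual
  inductive PTree : Type where
    | node : PForest → PTree
  inductive PForest : Type where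
    | nil : PForest
    | cons : ℤ → PTree → PForest → PForest
end

mutual
  def PTree.edges : PTree → ℕ
    | .node f => PForest.edges f
  def PForest.edges : PForest → ℕ
    | .nil => 0
    | .cons _ t f => 1 + PTree.edges t + PForest.edges f
end

-- A labeled tree is well-labeled when every edge increment lies in `{-1,0,1}`.
mutual
  def PTree.ok : PTree → Prop
    | .node f => PForest.ok f
  def PForest.ok : PForest → Prop
    | .nil => True
    | .cons i t f => (i = -1 ∨ i = 0 ∨ i = 1) ∧ PTree.ok t ∧ PForest.ok f
end

-- `PTree.pos x t` says that, when the root of `t` carries the label `x`, all the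
-- labels of `t` (obtained by accumulating the edge increments) are positive.
mutual
  def PTree.pos : ℤ → PTree → Prop
    | x, .node f => 0 < x ∧ PForest.pos x f
  def PForest.pos : ℤ → PForest → Prop
    | _, .nil => True
    | x, .cons i t f => PTree.pos (x + i) t ∧ PForest.pos x f
end

open scoped ENNReal

noncomputable section

theorem PTree.tsum_eq_tsum_node (G : PTree → ℝ≥0∞) : ∑' t, G t = ∑' f, G (.node f) := by
  refine (Function.Injective.tsum_eq (fun _ _ h => by injection h) fun t _ => ?_).symm
  obtain ⟨f⟩ := t
  exact ⟨f, rfl⟩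

theorem PForest.tsum_eq_nil_add_tsum_cons (F : PForest → ℝ≥0∞) :
    ∑' f, F f = F .nil + ∑' (i : ℤ) (t : PTree) (f : PForest), F (.cons i t f) := by
  classical
  have hinj : Function.Injective fun p : ℤ × PTree × PForest => PForest.cons p.1 p.2.1 p.2.2 := by
    rintro ⟨i, t, f⟩ ⟨j, u, g⟩ h
    simpa using h
  have hsupp : Function.support (fun f => if f = PForest.nil then 0 else F f) ⊆
      Set.range fun p : ℤ × PTree × PForest => PForest.cons p.1 p.2.1 p.2.2 := by
    rintro (_ | ⟨i, t, f⟩) hf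
    · simp at hf
    · exact ⟨(i, t, f), rfl⟩
  rw [ENNReal.tsum_eq_add_tsum_ite PForest.nil, ← hinj.tsum_eq hsupp, ENNReal.tsum_prod']
  simp_rw [ENNReal.tsum_prod']
  simp

open Classical in
def PTree.weight (z : ℝ≥0∞) (x : ℤ) (t : PTree) : ℝ≥0∞ :=
  if t.ok ∧ t.pos x then z ^ t.edges else 0

open Classical in
def PForest.weight (z : ℝ≥0∞) (x : ℤ) (f : PForest) : ℝ≥0∞ :=
  if f.ok ∧ f.pos x then z ^ f.edges else 0

open Classical in
def stepWeight (z : ℝ≥0∞) (i : ℤ) : ℝ≥0∞ := if i = -1 ∨ i = 0 ∨ i = 1 then z else 0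

theorem tsum_stepWeight_mul (z : ℝ≥0∞) (h : ℤ → ℝ≥0∞) :
    ∑' i, stepWeight z i * h i = z * (h (-1) + h 0 + h 1) := by
  rw [tsum_eq_sum (s := {-1, 0, 1}) fun i hi => by simp_all [stepWeight]]
  simp [stepWeight, mul_add, add_assoc]

theorem tsum_stepWeight_mul_mul (z : ℝ≥0∞) (a : ℤ → PTree → ℝ≥0∞) (b : PForest → ℝ≥0∞) :
    ∑' (i : ℤ) (t : PTree) (f : PForest), stepWeight z i * a i t * b f
      = z * (∑' t, a (-1) t + ∑' t, a 0 t + ∑' t, a 1 t) * ∑' f, b f := by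
  simp only [ENNReal.tsum_mul_left, ENNReal.tsum_mul_right]
  rw [tsum_stepWeight_mul]

section

variable {z : ℝ≥0∞} {x : ℤ}

theorem PTree.weight_node (f : PForest) :
    (node f).weight z x = if 0 < x then f.weight z x else 0 := by
  have hcond : (node f).ok ∧ (node f).pos x ↔ 0 < x ∧ f.ok ∧ f.pos x := by
    simp only [ok, pos]
    tauto
  simp only [weight, PForest.weight, edges]
  by_cases hx : 0 < x <;> by_cases hf : f.ok ∧ f.pos x
  · rw [if_pos (hcond.2 ⟨hx, hf⟩), if_pos hx, if_pos hf]
  all_goals rw [if_neg fun h => by have := hcond.1 h; tauto]; simp [*]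

theorem PForest.weight_nil : nil.weight z x = 1 := by simp [weight, ok, pos, edges]

theorem PForest.weight_cons (i : ℤ) (t : PTree) (f : PForest) :
    (cons i t f).weight z x = stepWeight z i * t.weight z (x + i) * f.weight z x := by
  have hcond : (cons i t f).ok ∧ (cons i t f).pos x ↔
      (i = -1 ∨ i = 0 ∨ i = 1) ∧ (t.ok ∧ t.pos (x + i)) ∧ (f.ok ∧ f.pos x) := by
    simp only [ok, pos]
    tauto
  simp only [weight, PTree.weight, stepWeight]
  by_cases hi : i = -1 ∨ i = 0 ∨ i = 1 <;> by_cases ht : t.ok ∧ t.pos (x + i) <;>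
    by_cases hf : f.ok ∧ f.pos x
  · rw [if_pos (hcond.2 ⟨hi, ht, hf⟩), if_pos hi, if_pos ht, if_pos hf, edges, pow_add, pow_add,
      pow_one]
  all_goals rw [if_neg fun h => by have := hcond.1 h; tauto]; simp [*]

end

-- `treeRecursion 12⁻¹ (2w) x = 2w x` is the paper's fixed-point equation
-- `w(x) = ∑ₖ 2^{-k-1} ((w(x-1) + w(x) + w(x+1))/3)^k` with the geometric series summed.
def treeRecursion {R : Type*} [Semiring R] (z : R) (q : ℤ → R) (x : ℤ) : R :=
  1 + z * (q (x - 1) + q x + q (x + 1)) * q x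

def PTree.gen (z : ℝ≥0∞) (x : ℤ) : ℝ≥0∞ := ∑' t : PTree, t.weight z x

def PForest.gen (z : ℝ≥0∞) (x : ℤ) : ℝ≥0∞ := ∑' f : PForest, f.weight z x

def PTree.genLT (N : ℕ) (z : ℝ≥0∞) (x : ℤ) : ℝ≥0∞ :=
  ∑' t : PTree, if t.edges < N then t.weight z x else 0

def PForest.genLT (N : ℕ) (z : ℝ≥0∞) (x : ℤ) : ℝ≥0∞ :=
  ∑' f : PForest, if f.edges < N then f.weight z x else 0

theorem PTree.gen_eq_ite (z : ℝ≥0∞) (x : ℤ) :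
    gen z x = if 0 < x then PForest.gen z x else 0 := by
  simp only [gen, PForest.gen, tsum_eq_tsum_node, weight_node]
  split_ifs <;> simp

theorem PTree.genLT_eq_ite (N : ℕ) (z : ℝ≥0∞) (x : ℤ) :
    genLT N z x = if 0 < x then PForest.genLT N z x else 0 := by
  simp only [genLT, PForest.genLT, tsum_eq_tsum_node, weight_node, edges]
  split_ifs <;> simp

theorem PForest.gen_eq (z : ℝ≥0∞) (x : ℤ) :
    gen z x = 1 + z * (PTree.gen z (x - 1) + PTree.gen z x + PTree.gen z (x + 1)) * gen z x := by
  conv_lhs => rw [gen, tsum_eq_nil_add_tsum_cons, weight_nil]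
  simp only [weight_cons, tsum_stepWeight_mul_mul]
  simp [PTree.gen, gen, sub_eq_add_neg]

theorem PTree.gen_eq_treeRecursion (z : ℝ≥0∞) {x : ℤ} (hx : 0 < x) :
    gen z x = treeRecursion z (gen z) x := by
  have h : gen z x = PForest.gen z x := by rw [gen_eq_ite, if_pos hx]
  calc gen z x = PForest.gen z x := h
    _ = _ := PForest.gen_eq z x
    _ = treeRecursion z (gen z) x := by rw [treeRecursion, h]

theorem PForest.genLT_succ_le (N : ℕ) (z : ℝ≥0∞) (x : ℤ) :
    genLT (N + 1) z x ≤
      1 + z * (PTree.genLT N z (x - 1) + PTree.genLT N z x + PTree.genLT N z (x + 1)) *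
        genLT N z x := by
  have hcons (i : ℤ) (t : PTree) (f : PForest) :
      (if (cons i t f).edges < N + 1 then (cons i t f).weight z x else 0) ≤
        stepWeight z i * (if t.edges < N then t.weight z (x + i) else 0) *
          (if f.edges < N then f.weight z x else 0) := by
    by_cases h : (cons i t f).edges < N + 1
    · have hsplit : (cons i t f).edges = 1 + t.edges + f.edges := rfl
      rw [if_pos h, if_pos (by omega), if_pos (by omega), weight_cons]
    · rw [if_neg h]
      exact zero_le
  rw [genLT, tsum_eq_nil_add_tsum_cons, if_pos (by simp [edges]), weight_nil]
  grw [ENNReal.tsum_le_tsum fun i => ENNReal.tsum_le_tsum fun t =>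
    ENNReal.tsum_le_tsum fun f => hcons i t f, tsum_stepWeight_mul_mul]
  simp [PTree.genLT, genLT, sub_eq_add_neg]

theorem PTree.gen_le_of_treeRecursion_le {z : ℝ≥0∞} {c : ℤ → ℝ≥0∞}
    (hc : ∀ x, 0 < x → treeRecursion z c x ≤ c x) {x : ℤ} (hx : 0 < x) : gen z x ≤ c x := by
  have hforest (N : ℕ) : ∀ x, 0 < x → PForest.genLT N z x ≤ c x := by
    induction N with
    | zero => simp [PForest.genLT]
    | succ N ih =>
      intro x hx
      have htree (y : ℤ) : genLT N z y ≤ c y := by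
        rw [genLT_eq_ite]
        split_ifs with hy
        exacts [ih y hy, zero_le]
      calc PForest.genLT (N + 1) z x
          ≤ 1 + z * (genLT N z (x - 1) + genLT N z x + genLT N z (x + 1)) *
              PForest.genLT N z x := PForest.genLT_succ_le N z x
        _ ≤ treeRecursion z c x := by
          unfold treeRecursion
          gcongr
          exacts [htree _, htree _, htree _, ih x hx]
        _ ≤ c x := hc x hx
  rw [gen, ENNReal.tsum_eq_iSup_sum]
  refine iSup_le fun s => ?_
  calc ∑ t ∈ s, t.weight z x
      = ∑ t ∈ s, if t.edges < s.sup edges + 1 then t.weight z x else 0 :=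
        Finset.sum_congr rfl fun t ht => (if_pos (Nat.lt_succ_of_le (Finset.le_sup ht))).symm
    _ ≤ genLT (s.sup edges + 1) z x := ENNReal.sum_le_tsum s
    _ ≤ c x := by
      rw [genLT_eq_ite, if_pos hx]
      exact hforest _ x hx

theorem PTree.gen_eq_tsum_card (z : ℝ≥0∞) (x : ℤ) :
    gen z x =
      ∑' n : ℕ, (ENat.card {t : PTree // t.ok ∧ t.edges = n ∧ t.pos x} : ℝ≥0∞) * z ^ n := by
  have hslice (n : ℕ) : ∑' t : PTree, (if n = t.edges then t.weight z x else 0) =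
      ENat.card {t : PTree // t.ok ∧ t.edges = n ∧ t.pos x} * z ^ n := by
    calc ∑' t : PTree, (if n = t.edges then t.weight z x else 0)
        = ∑' t, {t : PTree | t.ok ∧ t.edges = n ∧ t.pos x}.indicator (fun _ => z ^ n) t := by
          refine tsum_congr fun t => ?_
          by_cases h : n = t.edges <;> by_cases h' : t.ok ∧ t.pos x <;>
            simp [Set.indicator, weight, h, h', eq_comm]
      _ = ∑' _ : {t : PTree // t.ok ∧ t.edges = n ∧ t.pos x}, z ^ n := (tsum_subtype _ _).symm
      _ = _ := ENNReal.tsum_const _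
  simp_rw [← hslice]
  rw [gen, ENNReal.tsum_comm]
  exact tsum_congr fun t => (tsum_ite_eq t.edges fun _ => t.weight z x).symm

theorem PTree.gen_toReal_eq_tsum_natCard {z : ℝ≥0∞} (hz : z ≠ 0) {x : ℤ} (hgen : gen z x ≠ ⊤) :
    (gen z x).toReal =
      ∑' n : ℕ, (Nat.card {t : PTree // t.ok ∧ t.edges = n ∧ t.pos x} : ℝ) * z.toReal ^ n := by
  rw [gen_eq_tsum_card] at hgen ⊢
  have hterm (n : ℕ) := ne_top_of_le_ne_top hgen (ENNReal.le_tsum n)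
  rw [ENNReal.tsum_toReal_eq hterm]
  refine tsum_congr fun n => ?_
  have : Finite {t : PTree // t.ok ∧ t.edges = n ∧ t.pos x} := by
    refine ENat.card_lt_top.mp (lt_top_iff_ne_top.mpr fun h => hterm n ?_)
    rw [h]
    exact ENNReal.top_mul (pow_ne_zero n hz)
  rw [ENat.card_eq_coe_natCard, ENNReal.toReal_mul, ENNReal.toReal_pow]
  rfl

theorem ENNReal.ofReal_treeRecursion {z : ℝ} (hz : 0 ≤ z) {q : ℤ → ℝ} (hq : ∀ y, 0 ≤ q y)
    (x : ℤ) :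
    ENNReal.ofReal (treeRecursion z q x) =
      treeRecursion (ENNReal.ofReal z) (ENNReal.ofReal ∘ q) x := by
  have hsum : 0 ≤ q (x - 1) + q x + q (x + 1) := add_nonneg (add_nonneg (hq _) (hq _)) (hq _)
  have hprod : 0 ≤ z * (q (x - 1) + q x + q (x + 1)) * q x :=
    mul_nonneg (mul_nonneg hz hsum) (hq x)
  simp only [treeRecursion, Function.comp]
  rw [ENNReal.ofReal_add zero_le_one hprod, ENNReal.ofReal_one,
    ENNReal.ofReal_mul (mul_nonneg hz hsum), ENNReal.ofReal_mul hz,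
    ENNReal.ofReal_add (add_nonneg (hq _) (hq _)) (hq _), ENNReal.ofReal_add (hq _) (hq _)]

def survivalProb (x : ℤ) : ℝ := if 0 < x then x * (x + 3) / ((x + 1) * (x + 2)) else 0

theorem survivalProb_nonneg (x : ℤ) : 0 ≤ survivalProb x := by
  unfold survivalProb
  split_ifs with hx
  · have : (0 : ℝ) < x := by exact_mod_cast hx
    positivity
  · exact le_rfl

theorem survivalProb_le_one (x : ℤ) : survivalProb x ≤ 1 := by
  unfold survivalProb
  split_ifs with hx
  · have : (0 : ℝ) < x := by exact_mod_cast hx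
    rw [div_le_one (by positivity)]
    nlinarith
  · exact zero_le_one

theorem treeRecursion_two_mul_survivalProb {x : ℤ} (hx : 0 < x) :
    treeRecursion 12⁻¹ (fun y => 2 * survivalProb y) x = 2 * survivalProb x := by
  have hx' : (1 : ℝ) ≤ x := by exact_mod_cast hx
  simp only [treeRecursion, survivalProb]
  rw [if_pos hx, if_pos (by omega : 0 < x + 1)]
  rcases (Int.le_iff_eq_or_lt.mp hx).symm with hx1 | rfl
  · rw [if_pos (by omega)]
    push_cast
    have h0 : (x : ℝ) ≠ 0 := by positivity
    have h1 : (x : ℝ) - 1 + 1 = x := by ring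
    have h2 : (x : ℝ) - 1 + 2 = x + 1 := by ring
    rw [h1, h2]
    field_simp
    ring
  · norm_num

theorem PTree.gen_le_two_mul_survivalProb (x : ℤ) :
    gen 12⁻¹ x ≤ ENNReal.ofReal (2 * survivalProb x) := by
  by_cases hx : 0 < x
  · refine gen_le_of_treeRecursion_le (c := fun y => ENNReal.ofReal (2 * survivalProb y))
      (fun y hy => ?_) hx
    have h := ENNReal.ofReal_treeRecursion (z := 12⁻¹) (q := fun y => 2 * survivalProb y)
      (by norm_num) (fun y => by have := survivalProb_nonneg y; positivity) y
    rw [treeRecursion_two_mul_survivalProb hy, ENNReal.ofReal_inv_of_pos (by norm_num),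
      ENNReal.ofReal_ofNat] at h
    exact h.ge
  · rw [gen_eq_ite, if_neg hx]
    exact zero_le

theorem PTree.gen_ne_top (x : ℤ) : gen 12⁻¹ x ≠ ⊤ :=
  ne_top_of_le_ne_top ENNReal.ofReal_ne_top (gen_le_two_mul_survivalProb x)

theorem PTree.treeRecursion_toReal_gen {x : ℤ} (hx : 0 < x) :
    treeRecursion 12⁻¹ (fun y => (gen 12⁻¹ y).toReal) x = (gen 12⁻¹ x).toReal := by
  have h := ENNReal.ofReal_treeRecursion (z := 12⁻¹) (by norm_num)
    (fun y => ENNReal.toReal_nonneg (a := gen 12⁻¹ y)) x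
  simp only [Function.comp_def, ENNReal.ofReal_toReal (gen_ne_top _),
    ENNReal.ofReal_inv_of_pos (by norm_num : (0 : ℝ) < 12), ENNReal.ofReal_ofNat,
    ← gen_eq_treeRecursion _ hx] at h
  rw [← h, ENNReal.toReal_ofReal]
  unfold treeRecursion
  positivity

theorem antitone_of_convex_of_bddAbove {f : ℕ → ℝ}
    (hconv : ∀ n, 2 * f (n + 1) ≤ f n + f (n + 2)) (hbdd : BddAbove (Set.range f)) :
    Antitone f := by
  have hincr : Monotone fun n => f (n + 1) - f n :=
    monotone_nat_of_le_succ fun n => by linarith [hconv n]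
  refine antitone_nat_of_succ_le fun n => ?_
  by_contra! hn
  obtain ⟨B, hB⟩ := hbdd
  have hgrow (k : ℕ) : f n + k * (f (n + 1) - f n) ≤ f (n + k) := by
    induction k with
    | zero => simp
    | succ k ih =>
      have := hincr (show n ≤ n + k by omega)
      push_cast
      simp only [← add_assoc] at this ⊢
      linarith
  obtain ⟨k, hk⟩ := exists_nat_gt ((B - f n) / (f (n + 1) - f n))
  rw [div_lt_iff₀ (by linarith)] at hk
  linarith [hgrow k, hB ⟨n + k, rfl⟩]

theorem sub_convex_of_treeRecursion {a b : ℤ → ℝ} {x : ℤ}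
    (ha : treeRecursion 12⁻¹ a x = a x) (hb : treeRecursion 12⁻¹ b x = b x)
    (hba : ∀ y, b y ≤ a y) (hb0 : 0 ≤ b x) (ha2 : a x ≤ 2) :
    2 * (a x - b x) ≤ (a (x - 1) - b (x - 1)) + (a (x + 1) - b (x + 1)) := by
  have hdiff : a x - b x = 12⁻¹ * (a x * b x) *
      ((a (x - 1) - b (x - 1)) + (a x - b x) + (a (x + 1) - b (x + 1))) := by
    unfold treeRecursion at ha hb
    linear_combination a x * hb - b x * ha
  have hprod : a x * b x ≤ 4 := by nlinarith [hba x]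
  have hsum : 0 ≤ (a (x - 1) - b (x - 1)) + (a x - b x) + (a (x + 1) - b (x + 1)) := by
    linarith [hba (x - 1), hba x, hba (x + 1)]
  nlinarith [mul_le_mul_of_nonneg_right hprod hsum]

theorem eq_of_treeRecursion {a b : ℤ → ℝ}
    (ha : ∀ x, 0 < x → treeRecursion 12⁻¹ a x = a x)
    (hb : ∀ x, 0 < x → treeRecursion 12⁻¹ b x = b x)
    (hba : ∀ y, b y ≤ a y) (hb0 : ∀ y, 0 ≤ b y) (ha2 : ∀ y, a y ≤ 2) (h0 : a 0 = b 0) (n : ℕ) :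
    a n = b n := by
  have hanti : Antitone fun n : ℕ => a n - b n := by
    refine antitone_of_convex_of_bddAbove (fun n => ?_) ⟨2, ?_⟩
    · have h := sub_convex_of_treeRecursion (x := n + 1) (ha _ (by omega)) (hb _ (by omega)) hba
        (hb0 _) (ha2 _)
      push_cast
      simpa [add_assoc, one_add_one_eq_two] using h
    · rintro _ ⟨n, rfl⟩
      linarith [ha2 n, hb0 n]
  linarith [hanti (Nat.zero_le n), hba n, show a (0 : ℕ) = b (0 : ℕ) from h0]

theorem PTree.toReal_gen_eq_two_mul_survivalProb (n : ℕ) :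
    (gen 12⁻¹ n).toReal = 2 * survivalProb n := by
  refine (eq_of_treeRecursion (fun x hx => treeRecursion_two_mul_survivalProb hx)
    (fun x hx => treeRecursion_toReal_gen hx) (fun y => ?_) (fun y => ENNReal.toReal_nonneg)
    (fun y => by linarith [survivalProb_le_one y]) (by simp [survivalProb, gen_eq_ite]) n).symm
  simpa [ENNReal.toReal_ofReal, survivalProb_nonneg] using
    ENNReal.toReal_mono ENNReal.ofReal_ne_top (gen_le_two_mul_survivalProb y)

end

/-- Under the law `ρ_x` of the Geometric(1/2) Galton–Watson tree with uniform
`{-1,0,1}` label increments and root label `x > 0` (which gives mass `1/(2·12^n)` to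
each well-labeled tree with `n` edges), the probability that all labels are positive
is `w(x) = x(x+3)/((x+1)(x+2))`:
`∑_{n≥0} |𝕋_n^+(x)|/(2·12^n) = w(x)`. -/
theorem stmt_15 (x : ℕ) (hx : 0 < x) :
    ∑' n : ℕ,
        (Nat.card {t : PTree // t.ok ∧ t.edges = n ∧ t.pos (x : ℤ)} : ℝ) / (2 * 12 ^ n)
      = (x : ℝ) * ((x : ℝ) + 3) / (((x : ℝ) + 1) * ((x : ℝ) + 2)) := by
  have hsum := PTree.gen_toReal_eq_tsum_natCard (by norm_num) (PTree.gen_ne_top x)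
  rw [PTree.toReal_gen_eq_two_mul_survivalProb, ENNReal.toReal_inv, ENNReal.toReal_ofNat] at hsum
  calc ∑' n : ℕ, (Nat.card {t : PTree // t.ok ∧ t.edges = n ∧ t.pos (x : ℤ)} : ℝ) / (2 * 12 ^ n)
      = 2⁻¹ * ∑' n : ℕ,
          (Nat.card {t : PTree // t.ok ∧ t.edges = n ∧ t.pos (x : ℤ)} : ℝ) * 12⁻¹ ^ n := by
        rw [← tsum_mul_left]
        exact tsum_congr fun n => by rw [inv_pow]; field_simp
    _ = survivalProb x := by rw [← hsum]; ring
    _ = _ := by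
        rw [survivalProb, if_pos (by exact_mod_cast hx)]
        push_cast
        rfl
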